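/- Let (Ω, F, P) be a probability space with a filtration (F_i)_{i ≥ 0}, b ∈ (1, 2], c > 0, C ≥ 0, and let (D_i)_{i ≥ 1} be random variables such that each D_i is F_i-measurable and integrable with E[|D_i|^b] < ∞, E[D_i | F_{i−1}] = 0 almost surely, and E[|D_i|^b | F_{i−1}] ≤ C almost surely for every i. For n ≥ 1 set τ_n = c n^{1/b}. Then ( E[ ( (1/n) Σ_{i=1}^n ψ_{τ_n}(D_i) )² ] )^{1/2} ≤ ( √C · c^{(2−b)/2} + C · c^{1−b} ) · n^{(1−b)/b}. -/

import Mathlib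

open MeasureTheory Real

/-- The truncation function `ψ_τ(x) = max(−τ, min(x, τ))`. -/
noncomputable def truncFun (τ : ℝ) (x : ℝ) : ℝ := max (-τ) (min x τ)

/-!
Split `ψ_τ(D_i) = M_i + g_i` with `g_i = E[ψ_τ(D_i) | F_{i-1}]`. The `M_i` are martingale
differences, hence orthogonal in `L²`, and `E[M_i²] ≤ E[ψ_τ(D_i)²] ≤ C τ^{2-b}` because
`ψ_τ(x)² ≤ |x|^b τ^{2-b}`; so `‖∑ M_i‖₂ ≤ √(n C τ^{2-b})`. As `D_i` is conditionally centred,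
`g_i = E[ψ_τ(D_i) - D_i | F_{i-1}]`, and `|ψ_τ(x) - x| ≤ |x|^b τ^{1-b}` bounds this bias by
`C τ^{1-b}`. Minkowski's inequality adds the two bounds; with `τ = c n^{1/b}` both are of
order `n^{1/b}`.
-/

open ProbabilityTheory Finset

section Truncation

variable {τ x : ℝ}

lemma continuous_truncFun (τ : ℝ) : Continuous (truncFun τ) := by
  unfold truncFun; fun_prop

lemma abs_truncFun_le (hτ : 0 ≤ τ) : |truncFun τ x| ≤ τ :=
  abs_le.2 ⟨le_max_left _ _, max_le (by linarith) (min_le_right _ _)⟩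

lemma abs_truncFun_le_abs (hτ : 0 ≤ τ) : |truncFun τ x| ≤ |x| := by
  unfold truncFun; grind [abs_le, abs_of_nonneg, abs_of_nonpos]

lemma abs_truncFun_sub_le_abs (hτ : 0 ≤ τ) : |truncFun τ x - x| ≤ |x| := by
  unfold truncFun; grind [abs_le, abs_of_nonneg, abs_of_nonpos]

lemma truncFun_of_abs_le (h : |x| ≤ τ) : truncFun τ x = x := by
  rw [abs_le] at h
  rw [truncFun, min_eq_left h.2, max_eq_right h.1]

lemma abs_truncFun_sub_le {b : ℝ} (hb : 1 ≤ b) (hτ : 0 < τ) :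
    |truncFun τ x - x| ≤ τ ^ (1 - b) * |x| ^ b := by
  rcases le_or_gt |x| τ with h | h
  · rw [truncFun_of_abs_le h, sub_self, abs_zero]
    positivity
  · calc |truncFun τ x - x| ≤ |x| := abs_truncFun_sub_le_abs hτ.le
      _ = |x| ^ (1 - b) * |x| ^ b := by
        rw [← rpow_add' (abs_nonneg x) (by norm_num), sub_add_cancel, rpow_one]
      _ ≤ τ ^ (1 - b) * |x| ^ b :=
        mul_le_mul_of_nonneg_right (rpow_le_rpow_of_nonpos hτ h.le (by linarith)) (by positivity)

lemma sq_truncFun_le {b : ℝ} (hb₀ : 0 ≤ b) (hb₂ : b ≤ 2) (hτ : 0 ≤ τ) :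
    truncFun τ x ^ 2 ≤ |x| ^ b * τ ^ (2 - b) :=
  calc truncFun τ x ^ 2 = |truncFun τ x| ^ b * |truncFun τ x| ^ (2 - b) := by
        rw [← rpow_add' (abs_nonneg _) (by norm_num), add_sub_cancel, rpow_two, sq_abs]
    _ ≤ |x| ^ b * τ ^ (2 - b) :=
        mul_le_mul (rpow_le_rpow (abs_nonneg _) (abs_truncFun_le_abs hτ) hb₀)
          (rpow_le_rpow (abs_nonneg _) (abs_truncFun_le hτ) (by linarith))
          (by positivity) (by positivity)

end Truncation

section L2

variable {Ω : Type*} {m₀ : MeasurableSpace Ω} {μ : Measure Ω} {f g : Ω → ℝ}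

lemma MeasureTheory.MemLp.eLpNorm_two_eq_ofReal_sqrt (hf : MemLp f 2 μ) :
    eLpNorm f 2 μ = ENNReal.ofReal √(∫ ω, f ω ^ 2 ∂μ) := by
  rw [hf.eLpNorm_eq_integral_rpow_norm two_ne_zero ENNReal.ofNat_ne_top, sqrt_eq_rpow,
    ENNReal.toReal_ofNat, one_div]
  simp only [norm_eq_abs, rpow_two, sq_abs]

lemma sqrt_integral_sq_add_le (hf : MemLp f 2 μ) (hg : MemLp g 2 μ) :
    √(∫ ω, (f ω + g ω) ^ 2 ∂μ) ≤ √(∫ ω, f ω ^ 2 ∂μ) + √(∫ ω, g ω ^ 2 ∂μ) := by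
  have h := eLpNorm_add_le hf.1 hg.1 one_le_two
  rw [(hf.add hg).eLpNorm_two_eq_ofReal_sqrt, hf.eLpNorm_two_eq_ofReal_sqrt,
    hg.eLpNorm_two_eq_ofReal_sqrt, ← ENNReal.ofReal_add (by positivity) (by positivity)] at h
  exact (ENNReal.ofReal_le_ofReal_iff (by positivity)).1 h

lemma sqrt_integral_sq_le_of_abs_le [IsProbabilityMeasure μ] {K : ℝ} (hK : 0 ≤ K)
    (h : ∀ᵐ ω ∂μ, |f ω| ≤ K) : √(∫ ω, f ω ^ 2 ∂μ) ≤ K := by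
  have : ∫ ω, f ω ^ 2 ∂μ ≤ ∫ _, K ^ 2 ∂μ :=
    integral_mono_of_nonneg (ae_of_all _ fun ω => sq_nonneg _) (integrable_const _)
      (by filter_upwards [h] with ω hω using sq_le_sq' (abs_le.1 hω).1 (abs_le.1 hω).2)
  rw [integral_const, probReal_univ, one_smul] at this
  exact sqrt_le_iff.2 ⟨hK, this⟩

lemma integral_add_sq (hf : MemLp f 2 μ) (hg : MemLp g 2 μ) :
    ∫ ω, (f ω + g ω) ^ 2 ∂μ =
      ∫ ω, f ω ^ 2 ∂μ + 2 * ∫ ω, f ω * g ω ∂μ + ∫ ω, g ω ^ 2 ∂μ := by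
  have hfg : Integrable (fun ω => 2 * (f ω * g ω)) μ := (hf.integrable_mul hg).const_mul 2
  simp_rw [add_sq, mul_assoc]
  rw [integral_add, integral_add hf.integrable_sq hfg, integral_const_mul]
  exacts [hf.integrable_sq.add hfg, hg.integrable_sq]

end L2

section CondExp

variable {Ω : Type*} {m m₀ : MeasurableSpace Ω} {μ : Measure Ω}

lemma integral_le_of_condExp_le [IsProbabilityMeasure μ] (hm : m ≤ m₀) {f : Ω → ℝ} {C : ℝ}
    (h : ∀ᵐ ω ∂μ, μ[f | m] ω ≤ C) : ∫ ω, f ω ∂μ ≤ C :=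
  calc ∫ ω, f ω ∂μ = ∫ ω, μ[f | m] ω ∂μ := (integral_condExp hm).symm
    _ ≤ ∫ _, C ∂μ := integral_mono_ae integrable_condExp (integrable_const C) h
    _ = C := by simp

lemma integral_sq_sub_condExp_le [IsFiniteMeasure μ] (hm : m ≤ m₀) {X : Ω → ℝ}
    (hX : MemLp X 2 μ) : ∫ ω, (X ω - μ[X | m] ω) ^ 2 ∂μ ≤ ∫ ω, X ω ^ 2 ∂μ :=
  calc ∫ ω, (X ω - μ[X | m] ω) ^ 2 ∂μ = ∫ ω, Var[X; μ | m] ω ∂μ := (integral_condExp hm).symm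
    _ ≤ ∫ ω, μ[X ^ 2 | m] ω ∂μ :=
        integral_mono_ae integrable_condVar integrable_condExp (condVar_ae_le_condExp_sq hm hX)
    _ = ∫ ω, X ω ^ 2 ∂μ := integral_condExp hm

lemma integral_mul_eq_zero_of_condExp_eq_zero (hm : m ≤ m₀) [SigmaFinite (μ.trim hm)]
    {Y Z : Ω → ℝ} (hY : StronglyMeasurable[m] Y) (hYZ : Integrable (Y * Z) μ)
    (hZ : Integrable Z μ) (h : μ[Z | m] =ᵐ[μ] 0) : ∫ ω, Y ω * Z ω ∂μ = 0 :=
  calc ∫ ω, Y ω * Z ω ∂μ = ∫ ω, μ[Y * Z | m] ω ∂μ := (integral_condExp hm).symm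
    _ = ∫ _, (0 : ℝ) ∂μ := integral_congr_ae <| by
        filter_upwards [condExp_mul_of_stronglyMeasurable_left hY hYZ hZ, h] with ω h₁ h₂
        simp [h₁, h₂]
    _ = 0 := integral_zero _ _

lemma integral_sq_truncFun_le [IsProbabilityMeasure μ] (hm : m ≤ m₀) {D : Ω → ℝ} {b τ C : ℝ}
    (hb₀ : 0 ≤ b) (hb₂ : b ≤ 2) (hτ : 0 ≤ τ) (hDb : Integrable (fun ω => |D ω| ^ b) μ)
    (hcond : ∀ᵐ ω ∂μ, μ[fun ω => |D ω| ^ b | m] ω ≤ C) :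
    ∫ ω, truncFun τ (D ω) ^ 2 ∂μ ≤ C * τ ^ (2 - b) :=
  calc ∫ ω, truncFun τ (D ω) ^ 2 ∂μ ≤ ∫ ω, |D ω| ^ b * τ ^ (2 - b) ∂μ :=
        integral_mono_of_nonneg (ae_of_all _ fun ω => sq_nonneg _) (hDb.mul_const _)
          (ae_of_all _ fun ω => sq_truncFun_le hb₀ hb₂ hτ)
    _ = (∫ ω, |D ω| ^ b ∂μ) * τ ^ (2 - b) := integral_mul_const _ _
    _ ≤ C * τ ^ (2 - b) := by
        gcongr
        exact integral_le_of_condExp_le hm hcond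

lemma abs_condExp_truncFun_le {D : Ω → ℝ} {b τ : ℝ} (hb : 1 ≤ b) (hτ : 0 < τ)
    (hD : Integrable D μ) (hDb : Integrable (fun ω => |D ω| ^ b) μ) (hzero : μ[D | m] =ᵐ[μ] 0) :
    ∀ᵐ ω ∂μ, |μ[fun ω => truncFun τ (D ω) | m] ω| ≤ τ ^ (1 - b) * μ[fun ω => |D ω| ^ b | m] ω := by
  set X := fun ω => truncFun τ (D ω)
  have hX : Integrable X μ :=
    hD.mono ((continuous_truncFun τ).comp_aestronglyMeasurable hD.1)
      (ae_of_all _ fun ω => abs_truncFun_le_abs hτ.le)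
  have hbias : μ[X | m] =ᵐ[μ] μ[X - D | m] := by
    filter_upwards [condExp_sub hX hD m, hzero] with ω h₁ h₂
    simp [h₁, h₂]
  have hmono : μ[(|X - D|) | m] ≤ᵐ[μ] μ[τ ^ (1 - b) • fun ω => |D ω| ^ b | m] :=
    condExp_mono (hX.sub hD).abs (hDb.smul _) (ae_of_all _ fun ω => abs_truncFun_sub_le hb hτ)
  filter_upwards [hbias, abs_condExp_ae_le_condExp_abs (m := m) (μ := μ) (X - D), hmono,
    condExp_smul (m := m) (μ := μ) (τ ^ (1 - b)) (fun ω => |D ω| ^ b)] with ω h₁ h₂ h₃ h₄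
  simp only [Pi.abs_apply, h₁, h₄, Pi.smul_apply, smul_eq_mul] at h₂ h₃ ⊢
  exact h₂.trans h₃

end CondExp

section Martingale

variable {Ω : Type*} {m₀ : MeasurableSpace Ω} {μ : Measure Ω} {ℱ : Filtration ℕ m₀}

theorem integral_sq_sum_eq_sum_integral_sq [IsFiniteMeasure μ] {M : ℕ → Ω → ℝ}
    (hM : ∀ i, StronglyMeasurable[ℱ (i + 1)] (M i)) (hL2 : ∀ i, MemLp (M i) 2 μ)
    (hzero : ∀ i, μ[M i | ℱ i] =ᵐ[μ] 0) (n : ℕ) :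
    ∫ ω, (∑ i ∈ range n, M i ω) ^ 2 ∂μ = ∑ i ∈ range n, ∫ ω, M i ω ^ 2 ∂μ := by
  induction n with
  | zero => simp
  | succ n ih =>
    have hS : StronglyMeasurable[ℱ n] fun ω => ∑ i ∈ range n, M i ω :=
      Finset.stronglyMeasurable_fun_sum _ fun i hi =>
        (hM i).mono (ℱ.mono (mem_range.1 hi))
    have hSL2 : MemLp (fun ω => ∑ i ∈ range n, M i ω) 2 μ := memLp_finsetSum _ fun i _ => hL2 i
    have hcross : ∫ ω, (∑ i ∈ range n, M i ω) * M n ω ∂μ = 0 :=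
      integral_mul_eq_zero_of_condExp_eq_zero (ℱ.le n) hS (hSL2.integrable_mul (hL2 n))
        ((hL2 n).integrable one_le_two) (hzero n)
    simp only [sum_range_succ]
    rw [integral_add_sq hSL2 (hL2 n), hcross, ih, mul_zero, add_zero]

theorem sqrt_integral_sq_sum_le [IsProbabilityMeasure μ] {X : ℕ → Ω → ℝ}
    (hX : ∀ i, StronglyMeasurable[ℱ (i + 1)] (X i)) (hL2 : ∀ i, MemLp (X i) 2 μ) {σ K : ℝ}
    (hK : 0 ≤ K) (hvar : ∀ i, ∫ ω, X i ω ^ 2 ∂μ ≤ σ)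
    (hbias : ∀ i, ∀ᵐ ω ∂μ, |μ[X i | ℱ i] ω| ≤ K) (n : ℕ) :
    √(∫ ω, (∑ i ∈ range n, X i ω) ^ 2 ∂μ) ≤ √(n * σ) + n * K := by
  set g := fun i => μ[X i | ℱ i]
  set M := fun i => X i - g i
  have hgL2 : ∀ i, MemLp (g i) 2 μ := fun i => (hL2 i).condExp one_le_two
  have hML2 : ∀ i, MemLp (M i) 2 μ := fun i => (hL2 i).sub (hgL2 i)
  have hMmeas : ∀ i, StronglyMeasurable[ℱ (i + 1)] (M i) := fun i =>
    (hX i).sub (stronglyMeasurable_condExp.mono (ℱ.mono i.le_succ))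
  have hMzero : ∀ i, μ[M i | ℱ i] =ᵐ[μ] 0 := fun i => by
    filter_upwards [condExp_sub ((hL2 i).integrable one_le_two)
      ((hgL2 i).integrable one_le_two) (ℱ i),
      condExp_condExp_of_le le_rfl (ℱ.le i) (f := X i) (μ := μ)] with ω h₁ h₂
    rw [h₁, Pi.sub_apply, h₂, sub_self, Pi.zero_apply]
  have hA : √(∫ ω, (∑ i ∈ range n, M i ω) ^ 2 ∂μ) ≤ √(n * σ) := by
    rw [integral_sq_sum_eq_sum_integral_sq hMmeas hML2 hMzero]
    refine sqrt_le_sqrt ?_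
    calc ∑ i ∈ range n, ∫ ω, M i ω ^ 2 ∂μ ≤ ∑ _i ∈ range n, σ :=
          sum_le_sum fun i _ => (integral_sq_sub_condExp_le (ℱ.le i) (hL2 i)).trans (hvar i)
      _ = n * σ := by simp
  have hB : √(∫ ω, (∑ i ∈ range n, g i ω) ^ 2 ∂μ) ≤ n * K := by
    refine sqrt_integral_sq_le_of_abs_le (by positivity) ?_
    filter_upwards [ae_all_iff.2 hbias] with ω hω
    calc |∑ i ∈ range n, g i ω| ≤ ∑ i ∈ range n, |g i ω| := abs_sum_le_sum_abs _ _
      _ ≤ ∑ _i ∈ range n, K := sum_le_sum fun i _ => hω i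
      _ = n * K := by simp
  calc √(∫ ω, (∑ i ∈ range n, X i ω) ^ 2 ∂μ)
      = √(∫ ω, (∑ i ∈ range n, M i ω + ∑ i ∈ range n, g i ω) ^ 2 ∂μ) := by
        simp only [M, g, Pi.sub_apply, ← sum_add_distrib, sub_add_cancel]
    _ ≤ √(∫ ω, (∑ i ∈ range n, M i ω) ^ 2 ∂μ) + √(∫ ω, (∑ i ∈ range n, g i ω) ^ 2 ∂μ) :=
        sqrt_integral_sq_add_le (memLp_finsetSum _ fun i _ => hML2 i)
          (memLp_finsetSum _ fun i _ => hgL2 i)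
    _ ≤ √(n * σ) + n * K := add_le_add hA hB

end Martingale

lemma inv_mul_rate_eq {b c C n : ℝ} (hb : 0 < b) (hc : 0 < c) (hC : 0 ≤ C) (hn : 0 < n) :
    n⁻¹ * (√(n * (C * (c * n ^ (1 / b)) ^ (2 - b))) + n * ((c * n ^ (1 / b)) ^ (1 - b) * C))
      = (√C * c ^ ((2 - b) / 2) + C * c ^ (1 - b)) * n ^ ((1 - b) / b) := by
  have hpow : ∀ s, (c * n ^ (1 / b)) ^ s = c ^ s * n ^ (s / b) := fun s => by
    rw [mul_rpow hc.le (by positivity), ← rpow_mul hn.le, one_div_mul_eq_div]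
  have hsqrt : √((c * n ^ (1 / b)) ^ (2 - b)) = c ^ ((2 - b) / 2) * n ^ ((2 - b) / (2 * b)) := by
    rw [sqrt_eq_rpow, ← rpow_mul (by positivity), hpow, mul_one_div, div_div]
  have hexp : n⁻¹ * (n ^ (1 / 2 : ℝ) * n ^ ((2 - b) / (2 * b))) = n ^ ((1 - b) / b) := by
    rw [← rpow_neg_one, ← rpow_add hn, ← rpow_add hn]
    congr 1
    field_simp
    ring
  rw [sqrt_mul hn.le, sqrt_mul hC, hsqrt, hpow, sqrt_eq_rpow n]
  linear_combination (√C * c ^ ((2 - b) / 2)) * hexp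
    + (c ^ (1 - b) * n ^ ((1 - b) / b) * C) * inv_mul_cancel₀ hn.ne'

/-- `D i` stands for `D_{i+1}` (F_{i+1}-measurable) and `ℱ i` for `F_i`. -/
theorem truncated_average_L2_rate
    {Ω : Type*} {mΩ : MeasurableSpace Ω} (μ : Measure Ω) [IsProbabilityMeasure μ]
    (ℱ : Filtration ℕ mΩ)
    (b c C : ℝ) (hb : b ∈ Set.Ioc (1 : ℝ) 2) (hc : 0 < c) (hC : 0 ≤ C)
    (D : ℕ → Ω → ℝ)
    (hmeas : ∀ i, Measurable[ℱ (i + 1)] (D i))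
    (hint : ∀ i, Integrable (D i) μ)
    (hintb : ∀ i, Integrable (fun ω => |D i ω| ^ b) μ)
    (hzero : ∀ i, μ[D i | ℱ i] =ᵐ[μ] 0)
    (hcond : ∀ i, ∀ᵐ ω ∂μ, (μ[fun ω' => |D i ω'| ^ b | ℱ i]) ω ≤ C) :
    ∀ n : ℕ, 1 ≤ n →
      (∫ ω, ((1 / (n : ℝ)) * ∑ i ∈ Finset.range n,
          truncFun (c * (n : ℝ) ^ (1 / b)) (D i ω)) ^ 2 ∂μ) ^ (1 / (2 : ℝ))
        ≤ (Real.sqrt C * c ^ ((2 - b) / 2) + C * c ^ (1 - b)) * (n : ℝ) ^ ((1 - b) / b) := by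
  obtain ⟨hb₁, hb₂⟩ := hb
  intro n hn
  have hn₀ : (0 : ℝ) < n := by exact_mod_cast hn
  set τ := c * (n : ℝ) ^ (1 / b)
  have hτ : 0 < τ := by positivity
  have hXmeas : ∀ i, StronglyMeasurable[ℱ (i + 1)] fun ω => truncFun τ (D i ω) := fun i =>
    ((continuous_truncFun τ).measurable.comp (hmeas i)).stronglyMeasurable
  have hXL2 : ∀ i, MemLp (fun ω => truncFun τ (D i ω)) 2 μ := fun i =>
    .of_bound ((hXmeas i).mono (ℱ.le _)).aestronglyMeasurable τ
      (ae_of_all _ fun ω => abs_truncFun_le hτ.le)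
  have hvar : ∀ i, ∫ ω, truncFun τ (D i ω) ^ 2 ∂μ ≤ C * τ ^ (2 - b) := fun i =>
    integral_sq_truncFun_le (ℱ.le i) (by linarith) hb₂ hτ.le (hintb i) (hcond i)
  have hbias : ∀ i, ∀ᵐ ω ∂μ, |μ[fun ω => truncFun τ (D i ω) | ℱ i] ω| ≤ τ ^ (1 - b) * C :=
    fun i => by
      filter_upwards [abs_condExp_truncFun_le hb₁.le hτ (hint i) (hintb i) (hzero i), hcond i]
        with ω h₁ h₂
      exact h₁.trans (by gcongr)
  calc (∫ ω, (1 / (n : ℝ) * ∑ i ∈ range n, truncFun τ (D i ω)) ^ 2 ∂μ) ^ (1 / (2 : ℝ))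
      = (n : ℝ)⁻¹ * √(∫ ω, (∑ i ∈ range n, truncFun τ (D i ω)) ^ 2 ∂μ) := by
        rw [← sqrt_eq_rpow]
        simp_rw [mul_pow]
        rw [integral_const_mul, sqrt_mul (sq_nonneg _), sqrt_sq (by positivity), one_div]
    _ ≤ (n : ℝ)⁻¹ * (√(n * (C * τ ^ (2 - b))) + n * (τ ^ (1 - b) * C)) := by
        gcongr
        exact sqrt_integral_sq_sum_le hXmeas hXL2 (by positivity) hvar hbias n
    _ = _ := inv_mul_rate_eq (by linarith) hc hC hn₀
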